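/- Let L ⊆ L' be first-order languages with L' an expansion of L, let M' be an L'-structure, and let M denote the reduct of M' to L. Suppose U ⊆ M' generates M' as an L'-structure, U is irredundant in M' (for every u ∈ U, u does not belong to the L'-substructure of M' generated by U ∖ {u}), and |U| = κ is an infinite cardinal. Let K be a set of L'-terms with |K| ≤ κ, and set K*U = U ∪ { t^{M'}(ū) : t ∈ K, ū a tuple from U }. Then the L-structure Sg^M(K*U) is strictly κ-generated. -/

import Mathlib

open FirstOrder Language Cardinal

universe u

/-- `X` generates the `L`-structure `M`: the substructure generated by `X` is all of `M`. -/
def Generates (L : FirstOrder.Language.{u, u}) (M : Type u) [L.Structure M] (X : Set M) : Prop :=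
  Substructure.closure L X = ⊤

/-- `M` is `μ`-generated: it is generated by a set of cardinality `μ`. -/
def IsGenerated (L : FirstOrder.Language.{u, u}) (M : Type u) [L.Structure M]
    (μ : Cardinal.{u}) : Prop :=
  ∃ X : Set M, #X = μ ∧ Generates L M X

/-- `M` is strictly `μ`-generated: it is `μ`-generated but not `ν`-generated for any `ν < μ`. -/
def StrictlyGenerated (L : FirstOrder.Language.{u, u}) (M : Type u) [L.Structure M]
    (μ : Cardinal.{u}) : Prop :=
  IsGenerated L M μ ∧ ∀ ν < μ, ¬ IsGenerated L M ν

/-- `K*V`: the set `V` together with all values of terms from `K` at tuples from `V`. -/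
def KStarSet {L' : FirstOrder.Language.{u, u}} (M : Type u) [L'.Structure M]
    (K : Set (Σ n, L'.Term (Fin n))) (V : Set M) : Set M :=
  V ∪ {x | ∃ t ∈ K, ∃ v : Fin t.1 → ↥V, x = t.2.realize fun i => (v i : M)}

/-!
An `L`-generating set `X` of `Sg^M(K*U)` lies in the `L'`-closure of `U`, so each of its elements
is in the `L'`-closure of finitely many elements of `U`. If `|X| < κ`, these finite sets cover fewer
than `κ` elements of `U`, yet their `L'`-closure contains `Sg^M(X) ⊇ U`, contradicting irredundance.
Conversely, `K*U` generates `Sg^M(K*U)` and has size `κ`, as `|K| ≤ κ` and `κ ^ n = κ`.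
-/

theorem Cardinal.mk_iUnion_lt_of_finite {α ι : Type u} {w : ι → Set α} (hw : ∀ i, (w i).Finite)
    {κ : Cardinal.{u}} (hκ : ℵ₀ ≤ κ) (hι : #ι < κ) : #(⋃ i, w i) < κ := by
  rcases lt_or_ge #ι ℵ₀ with hfin | hinf
  · have : Finite ι := lt_aleph0_iff_finite.1 hfin
    exact (Set.finite_iUnion hw).lt_aleph0.trans_le hκ
  · calc #(⋃ i, w i) ≤ #ι * ℵ₀ :=
          (mk_iUnion_le w).trans (mul_le_mul' le_rfl (ciSup_le' fun i => (hw i).lt_aleph0.le))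
      _ = #ι := mul_aleph0_eq hinf
      _ < κ := hι

namespace FirstOrder.Language

namespace Substructure

variable {L : Language.{u, u}} {M : Type u} [L.Structure M]

theorem exists_finite_subset_of_mem_closure {s : Set M} {x : M} (h : x ∈ closure L s) :
    ∃ w ⊆ s, w.Finite ∧ x ∈ closure L w := by
  refine closure_induction h (fun x hx => ⟨{x}, by simpa using hx, Set.finite_singleton x,
    subset_closure rfl⟩) ?_
  intro n f xs hxs
  choose w hws hwf hxw using hxs
  exact ⟨⋃ i, w i, Set.iUnion_subset hws, Set.finite_iUnion hwf,
    fun_mem _ f xs fun i => closure_mono (Set.subset_iUnion w i) (hxw i)⟩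

theorem closure_image_val_eq {S : L.Substructure M} {X : Set S} (hX : closure L X = ⊤) :
    closure L (Subtype.val '' X) = S := by
  rw [← coe_subtype, ← Embedding.coe_toHom, closure_image, hX, ← Hom.range_eq_map, range_subtype]

theorem closure_preimage_val_closure (s : Set M) :
    closure L (Subtype.val ⁻¹' s : Set (closure L s)) = ⊤ := by
  apply map_injective_of_injective (f := (closure L s).subtype.toHom)
    (closure L s).subtype_injective
  rw [← closure_image, ← Hom.range_eq_map, range_subtype, Embedding.coe_toHom, coe_subtype,
    Set.image_preimage_eq_of_subset (by simp [subset_closure])]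

theorem not_subset_closure_of_mk_lt {U Y : Set M} (hUirr : ∀ u ∈ U, u ∉ closure L (U \ {u}))
    (hU : ℵ₀ ≤ #U) (hYU : Y ⊆ closure L U) (hY : #Y < #U) : ¬ U ⊆ closure L Y := by
  intro hUY
  choose w hwU hwf hyw using fun y : Y => exists_finite_subset_of_mem_closure (hYU y.2)
  set W := ⋃ y, w y
  have hUW : U ⊆ closure L W := hUY.trans <| closure_le.2 fun y hy =>
    closure_mono (Set.subset_iUnion w ⟨y, hy⟩) (hyw ⟨y, hy⟩)
  obtain ⟨u, hu, huW⟩ : ∃ u ∈ U, u ∉ W := Set.not_subset.1 fun h =>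
    (mk_le_mk_of_subset h).not_gt (mk_iUnion_lt_of_finite hwf hU hY)
  have hWU : W ⊆ U \ {u} := fun x hx => ⟨Set.iUnion_subset hwU hx, by rintro rfl; exact huW hx⟩
  exact hUirr u hu (closure_mono hWU (hUW hu))

end Substructure

theorem isGenerated_closure {L : Language.{u, u}} {M : Type u} [L.Structure M] (s : Set M) :
    IsGenerated L (Substructure.closure L s) #s :=
  ⟨_, mk_preimage_of_injective_of_subset_range _ _ Subtype.val_injective
    (by simp [Substructure.subset_closure]), Substructure.closure_preimage_val_closure s⟩

theorem LHom.closure_subset_closure {L L' : Language.{u, u}} (φ : L →ᴸ L') {M : Type u}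
    [L.Structure M] [L'.Structure M] [φ.IsExpansionOn M] (s : Set M) :
    (Substructure.closure L s : Set M) ⊆ Substructure.closure L' s := by
  rw [← φ.coe_substructureReduct]
  exact Substructure.closure_le.2 Substructure.subset_closure

theorem kStarSet_subset_closure {L : Language.{u, u}} {M : Type u} [L.Structure M]
    (K : Set (Σ n, L.Term (Fin n))) (V : Set M) :
    KStarSet M K V ⊆ Substructure.closure L V := by
  rintro _ (hx | ⟨t, -, v, rfl⟩)
  · exact Substructure.subset_closure hx
  · exact Term.realize_mem _ _ fun i => Substructure.subset_closure (v i).2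

theorem mk_kStarSet_le {L : Language.{u, u}} {M : Type u} [L.Structure M]
    {K : Set (Σ n, L.Term (Fin n))} {V : Set M} {κ : Cardinal.{u}} (hκ : ℵ₀ ≤ κ)
    (hK : #K ≤ κ) (hV : #V ≤ κ) : #(KStarSet M K V) ≤ κ := by
  have hvalues : {x | ∃ t ∈ K, ∃ v : Fin t.1 → V, x = t.2.realize fun i => (v i : M)} ⊆
      ⋃ t : K, Set.range fun v : Fin t.1.1 → V => t.1.2.realize fun i => (v i : M) := by
    rintro _ ⟨t, ht, v, rfl⟩
    exact Set.mem_iUnion.2 ⟨⟨t, ht⟩, v, rfl⟩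
  have htuples (t : K) : #(Set.range fun v : Fin t.1.1 → V => t.1.2.realize fun i => (v i : M))
      ≤ κ := by
    refine mk_range_le.trans ?_
    rw [mk_arrow, lift_uzero, lift_mk_fin]
    exact (power_le_power_right hV).trans (power_nat_le hκ)
  calc #(KStarSet M K V)
      ≤ #V + #K * ⨆ t : K, #(Set.range fun v : Fin t.1.1 → V =>
          t.1.2.realize fun i => (v i : M)) :=
        (mk_union_le _ _).trans (add_le_add le_rfl ((mk_le_mk_of_subset hvalues).trans
          (mk_iUnion_le _)))
    _ ≤ κ + κ * κ := add_le_add hV (mul_le_mul' hK (ciSup_le' htuples))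
    _ = κ := by rw [mul_eq_self hκ, add_eq_self hκ]

end FirstOrder.Language

theorem stmt9_general {L L' : FirstOrder.Language.{u, u}} (φ : L →ᴸ L') (M : Type u)
    [L.Structure M] [L'.Structure M] [φ.IsExpansionOn M]
    (U : Set M)
    (hUirr : ∀ u ∈ U, u ∉ Substructure.closure L' (U \ {u}))
    (κ : Cardinal.{u}) (hκ : ℵ₀ ≤ κ) (hU : #U = κ)
    (K : Set (Σ n, L'.Term (Fin n))) (hK : #K ≤ κ) :
    StrictlyGenerated L (↥(Substructure.closure L (KStarSet M K U))) κ := by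
  have hUK : U ⊆ KStarSet M K U := Set.subset_union_left
  have hcard : #(KStarSet M K U) = κ :=
    le_antisymm (mk_kStarSet_le hκ hK hU.le) (hU ▸ mk_le_mk_of_subset hUK)
  refine ⟨hcard ▸ isGenerated_closure _, ?_⟩
  rintro ν hν ⟨X, rfl, hX⟩
  have hXU : Subtype.val '' X ⊆ Substructure.closure L' U := by
    rintro _ ⟨x, -, rfl⟩
    exact Substructure.closure_le.2 (kStarSet_subset_closure K U) (φ.closure_subset_closure _ x.2)
  have hUX : U ⊆ Substructure.closure L' (Subtype.val '' X) := by
    refine hUK.trans ((Substructure.subset_closure (L := L)).trans ?_)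
    have h := φ.closure_subset_closure (Subtype.val '' X)
    rwa [Substructure.closure_image_val_eq hX] at h
  exact Substructure.not_subset_closure_of_mk_lt hUirr (hU ▸ hκ) hXU
    (mk_image_le.trans_lt (hU ▸ hν)) hUX

/-- If `U` generates `M'` as an `L'`-structure, `U` is irredundant in `M'`, `|U| = κ ≥ ℵ₀`,
and `K` is a set of `L'`-terms with `|K| ≤ κ`, then the `L`-structure `Sg^M(K*U)` is strictly
`κ`-generated. -/
theorem stmt9 {L L' : FirstOrder.Language.{u, u}} (φ : L →ᴸ L') (M : Type u)
    [L.Structure M] [L'.Structure M] [φ.IsExpansionOn M]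
    (U : Set M)
    (hUgen : Substructure.closure L' U = ⊤)
    (hUirr : ∀ u ∈ U, u ∉ Substructure.closure L' (U \ {u}))
    (κ : Cardinal.{u}) (hκ : ℵ₀ ≤ κ) (hU : #U = κ)
    (K : Set (Σ n, L'.Term (Fin n))) (hK : #K ≤ κ) :
    StrictlyGenerated L (↥(Substructure.closure L (KStarSet M K U))) κ :=
  stmt9_general φ M U hUirr κ hκ hU K hK
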